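/- Let f : ℝⁿ → ℝ be twice continuously differentiable, μ-strongly convex with μ > 0, and with L-Lipschitz Hessian, L > 0. Let ε ∈ (0, 1/2) and let R ∈ ℝ^{p×n} have full row rank p ≤ n with P := Rᵀ, such that all singular values of P lie in the interval [1 − ε, 1 + ε]. Let x⁺ := x − P(R∇²f(x)P)⁻¹R∇f(x) be the coarse step at x ∈ ℝⁿ, and suppose ‖R∇f(x⁺)‖ ≥ (1 − ε)‖∇f(x⁺)‖. Then ‖∇f(x⁺)‖ ≤ (L/(2μ²)) ((1 + ε)/(1 − ε))⁵ ‖∇f(x)‖². -/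

import Mathlib

open Matrix

noncomputable section

/-- The spectral (`ℓ²`-operator) norm of a real matrix, i.e. the operator norm of the
induced linear map between Euclidean spaces. -/
def Matrix.specNorm {m n : ℕ} (A : Matrix (Fin m) (Fin n) ℝ) : ℝ :=
  ‖LinearMap.toContinuousLinearMap (Matrix.toEuclideanLin A)‖

/-- The `i`-th singular value of `P := Rᵀ`, i.e. the square root of the `i`-th eigenvalue of
the positive semidefinite matrix `PᴴP = R Rᴴ`. -/
def Matrix.singularValueT {p n : ℕ} (R : Matrix (Fin p) (Fin n) ℝ) (i : Fin p) : ℝ :=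
  Real.sqrt ((Matrix.isHermitian_mul_conjTranspose_self R).eigenvalues i)

/-!
The coarse step `s = x⁺ - x` satisfies the Galerkin condition `R (∇f(x) + ∇²f(x) s) = 0`, so
`R ∇f(x⁺)` is `R` applied to the Taylor remainder `∇f(x + s) - ∇f(x) - ∇²f(x) s`, whose norm is at
most `(L/2) ‖s‖²`. The singular values of `P` give `(1-ε)‖u‖ ≤ ‖P u‖ ≤ (1+ε)‖u‖` and
`‖R v‖ ≤ (1+ε)‖v‖`, hence `R ∇²f(x) P` is coercive with constant `μ (1-ε)²` and
`‖s‖ ≤ (1+ε)² ‖∇f(x)‖ / (μ (1-ε)²)`. The acceptance condition `(1-ε)‖∇f(x⁺)‖ ≤ ‖R ∇f(x⁺)‖`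
turns these into the bound.
-/

open RealInnerProductSpace

section Taylor

variable {E F : Type*} [NormedAddCommGroup E] [NormedSpace ℝ E]
  [NormedAddCommGroup F] [NormedSpace ℝ F]

theorem norm_image_add_sub_sub_fderiv_le {g : E → F} {g' : E → E →L[ℝ] F} {L : ℝ} {x : E}
    (hg : ∀ y, HasFDerivAt g (g' y) y) (hLip : ∀ y, ‖g' y - g' x‖ ≤ L * ‖y - x‖) (s : E) :
    ‖g (x + s) - g x - g' x s‖ ≤ L / 2 * ‖s‖ ^ 2 := by
  have hφ : ∀ t : ℝ, HasDerivAt (fun t : ℝ => g (x + t • s) - g x - t • g' x s)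
      (g' (x + t • s) s - g' x s) t := by
    intro t
    have hline : HasDerivAt (fun t : ℝ => x + t • s) s t := by
      simpa using ((hasDerivAt_id t).smul_const s).const_add x
    have h := (((hg _).comp_hasDerivAt t hline).sub_const (g x)).sub
      ((hasDerivAt_id t).smul_const (g' x s))
    rw [one_smul] at h
    exact h
  have hbound : ∀ t ∈ Set.Ico (0 : ℝ) 1, ‖g' (x + t • s) s - g' x s‖ ≤ L * ‖s‖ ^ 2 * t := by
    intro t ht
    calc ‖g' (x + t • s) s - g' x s‖ = ‖(g' (x + t • s) - g' x) s‖ := rfl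
      _ ≤ ‖g' (x + t • s) - g' x‖ * ‖s‖ := ContinuousLinearMap.le_opNorm _ _
      _ ≤ L * ‖x + t • s - x‖ * ‖s‖ := by gcongr; exact hLip _
      _ = L * ‖s‖ ^ 2 * t := by
        rw [add_sub_cancel_left, norm_smul, Real.norm_of_nonneg ht.1]; ring
  have hB : ∀ t : ℝ, HasDerivAt (fun t : ℝ => L * ‖s‖ ^ 2 / 2 * t ^ 2) (L * ‖s‖ ^ 2 * t) t := by
    intro t
    refine ((hasDerivAt_pow 2 t).const_mul (L * ‖s‖ ^ 2 / 2)).congr_deriv ?_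
    push_cast
    ring
  have key := image_norm_le_of_norm_deriv_right_le_deriv_boundary
    (fun t _ => (hφ t).continuousAt.continuousWithinAt) (fun t _ => (hφ t).hasDerivWithinAt)
    (by simp) hB hbound (Set.right_mem_Icc.mpr zero_le_one)
  simpa [div_mul_eq_mul_div] using key

end Taylor

theorem mul_norm_le_norm_of_mul_norm_sq_le_inner {E : Type*} [NormedAddCommGroup E]
    [InnerProductSpace ℝ E] {u v : E} {c : ℝ} (h : c * ‖u‖ ^ 2 ≤ ⟪v, u⟫) : c * ‖u‖ ≤ ‖v‖ := by
  rcases (norm_nonneg u).eq_or_lt with hu | hu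
  · rw [← hu, mul_zero]; exact norm_nonneg v
  · refine le_of_mul_le_mul_right ?_ hu
    calc c * ‖u‖ * ‖u‖ = c * ‖u‖ ^ 2 := by ring
      _ ≤ ‖v‖ * ‖u‖ := h.trans (real_inner_le_norm v u)

namespace Matrix

variable {m n : Type*} [Fintype m] [Fintype n] [DecidableEq m] [DecidableEq n]

theorem toEuclideanLin_mul_apply {l : Type*} (A : Matrix l m ℝ) (B : Matrix m n ℝ)
    (v : EuclideanSpace ℝ n) :
    toEuclideanLin (A * B) v = toEuclideanLin A (toEuclideanLin B v) := by
  ext; simp [mulVec_mulVec]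

theorem inner_toEuclideanLin_left (A : Matrix m n ℝ) (v : EuclideanSpace ℝ n)
    (u : EuclideanSpace ℝ m) :
    ⟪toEuclideanLin A v, u⟫ = ⟪v, toEuclideanLin Aᵀ u⟫ := by
  rw [← conjTranspose_eq_transpose_of_trivial, toEuclideanLin_conjTranspose_eq_adjoint,
    LinearMap.adjoint_inner_right]

theorem norm_sq_toEuclideanLin_transpose (R : Matrix m n ℝ) (u : EuclideanSpace ℝ m) :
    ‖toEuclideanLin Rᵀ u‖ ^ 2 = ⟪toEuclideanLin (R * Rᵀ) u, u⟫ := by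
  rw [toEuclideanLin_mul_apply, inner_toEuclideanLin_left, real_inner_self_eq_norm_sq]

theorem PosSemidef.mul_norm_sq_le_inner {A : Matrix n n ℝ} {c : ℝ} (h : (A - c • 1).PosSemidef)
    (u : EuclideanSpace ℝ n) : c * ‖u‖ ^ 2 ≤ ⟪toEuclideanLin A u, u⟫ := by
  have := (isPositive_toEuclideanLin_iff.mpr h).inner_nonneg_left u
  simp only [map_sub, map_smul, toLpLin_one, LinearMap.sub_apply, LinearMap.smul_apply,
    LinearMap.id_apply, inner_sub_left, real_inner_smul_left, real_inner_self_eq_norm_sq] at this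
  linarith

theorem PosSemidef.inner_le_mul_norm_sq {A : Matrix n n ℝ} {c : ℝ} (h : (c • 1 - A).PosSemidef)
    (u : EuclideanSpace ℝ n) : ⟪toEuclideanLin A u, u⟫ ≤ c * ‖u‖ ^ 2 := by
  have := (isPositive_toEuclideanLin_iff.mpr h).inner_nonneg_left u
  simp only [map_sub, map_smul, toLpLin_one, LinearMap.sub_apply, LinearMap.smul_apply,
    LinearMap.id_apply, inner_sub_left, real_inner_smul_left, real_inner_self_eq_norm_sq] at this
  linarith

open scoped MatrixOrder in
theorem IsHermitian.posSemidef_sub_smul_one {A : Matrix n n ℝ} (hA : A.IsHermitian) {c : ℝ}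
    (h : ∀ i, c ≤ hA.eigenvalues i) : (A - c • 1).PosSemidef := by
  rw [← le_iff, ← Algebra.algebraMap_eq_smul_one, algebraMap_le_iff_le_spectrum hA.isSelfAdjoint,
    hA.spectrum_real_eq_range_eigenvalues]
  rintro _ ⟨i, rfl⟩
  exact h i

open scoped MatrixOrder in
theorem IsHermitian.posSemidef_smul_one_sub {A : Matrix n n ℝ} (hA : A.IsHermitian) {c : ℝ}
    (h : ∀ i, hA.eigenvalues i ≤ c) : (c • 1 - A).PosSemidef := by
  rw [← le_iff, ← Algebra.algebraMap_eq_smul_one, le_algebraMap_iff_spectrum_le hA.isSelfAdjoint,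
    hA.spectrum_real_eq_range_eigenvalues]
  rintro _ ⟨i, rfl⟩
  exact h i


theorem norm_toEuclideanLin_le_of_transpose {R : Matrix m n ℝ} {b : ℝ} (hb : 0 ≤ b)
    (h : ∀ u, ‖toEuclideanLin Rᵀ u‖ ≤ b * ‖u‖) (v : EuclideanSpace ℝ n) :
    ‖toEuclideanLin R v‖ ≤ b * ‖v‖ := by
  have hsq : ‖toEuclideanLin R v‖ ^ 2 ≤ b * ‖v‖ * ‖toEuclideanLin R v‖ :=
    calc ‖toEuclideanLin R v‖ ^ 2 = ⟪v, toEuclideanLin Rᵀ (toEuclideanLin R v)⟫ := by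
          rw [← inner_toEuclideanLin_left, real_inner_self_eq_norm_sq]
      _ ≤ ‖v‖ * ‖toEuclideanLin Rᵀ (toEuclideanLin R v)‖ := real_inner_le_norm _ _
      _ ≤ ‖v‖ * (b * ‖toEuclideanLin R v‖) := by gcongr; exact h _
      _ = b * ‖v‖ * ‖toEuclideanLin R v‖ := by ring
  nlinarith [norm_nonneg (toEuclideanLin R v), norm_nonneg v, mul_nonneg hb (norm_nonneg v)]

theorem norm_toEuclideanLin_transpose_le {p k : ℕ} (R : Matrix (Fin p) (Fin k) ℝ) {b : ℝ}
    (hb : 0 ≤ b) (h : ∀ i, R.singularValueT i ≤ b) (u : EuclideanSpace ℝ (Fin p)) :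
    ‖toEuclideanLin Rᵀ u‖ ≤ b * ‖u‖ := by
  have hpsd : (b ^ 2 • 1 - R * Rᵀ).PosSemidef := by
    rw [← conjTranspose_eq_transpose_of_trivial]
    exact (isHermitian_mul_conjTranspose_self R).posSemidef_smul_one_sub fun i =>
      (Real.sqrt_le_iff.mp (h i)).2
  refine (pow_le_pow_iff_left₀ (norm_nonneg _) (by positivity) two_ne_zero).mp ?_
  rw [mul_pow, norm_sq_toEuclideanLin_transpose]
  exact hpsd.inner_le_mul_norm_sq u

theorem mul_norm_le_norm_toEuclideanLin_transpose {p k : ℕ} (R : Matrix (Fin p) (Fin k) ℝ)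
    {a : ℝ} (ha : 0 ≤ a) (h : ∀ i, a ≤ R.singularValueT i) (u : EuclideanSpace ℝ (Fin p)) :
    a * ‖u‖ ≤ ‖toEuclideanLin Rᵀ u‖ := by
  have hpsd : (R * Rᵀ - a ^ 2 • 1).PosSemidef := by
    rw [← conjTranspose_eq_transpose_of_trivial]
    exact (isHermitian_mul_conjTranspose_self R).posSemidef_sub_smul_one fun i =>
      (Real.le_sqrt ha (eigenvalues_self_mul_conjTranspose_nonneg R i)).mp (h i)
  refine (pow_le_pow_iff_left₀ (by positivity) (norm_nonneg _) two_ne_zero).mp ?_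
  rw [mul_pow, norm_sq_toEuclideanLin_transpose]
  exact hpsd.mul_norm_sq_le_inner u

theorem mul_norm_le_norm_toEuclideanLin_mul_mul_transpose {R : Matrix m n ℝ}
    {H : Matrix n n ℝ} {μ a : ℝ} (hμ : 0 ≤ μ) (ha : 0 ≤ a) (hH : (H - μ • 1).PosSemidef)
    (hR : ∀ u, a * ‖u‖ ≤ ‖toEuclideanLin Rᵀ u‖) (u : EuclideanSpace ℝ m) :
    μ * a ^ 2 * ‖u‖ ≤ ‖toEuclideanLin (R * H * Rᵀ) u‖ := by
  refine mul_norm_le_norm_of_mul_norm_sq_le_inner ?_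
  rw [toEuclideanLin_mul_apply, toEuclideanLin_mul_apply, inner_toEuclideanLin_left]
  calc μ * a ^ 2 * ‖u‖ ^ 2 = μ * (a * ‖u‖) ^ 2 := by ring
    _ ≤ μ * ‖toEuclideanLin Rᵀ u‖ ^ 2 := by gcongr; exact hR u
    _ ≤ _ := hH.mul_norm_sq_le_inner _

theorem isUnit_det_of_mul_norm_le {M : Matrix m m ℝ} {c : ℝ} (hc : 0 < c)
    (h : ∀ u, c * ‖u‖ ≤ ‖toEuclideanLin M u‖) : IsUnit M.det := by
  rw [← isUnit_iff_isUnit_det, ← mulVec_injective_iff_isUnit]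
  intro v w hvw
  have := h (WithLp.toLp 2 (v - w))
  simp [hvw] at this
  simpa [sub_eq_zero] using nonpos_of_mul_nonpos_right this hc

theorem mul_norm_toEuclideanLin_inv_le {M : Matrix m m ℝ} {c : ℝ} (hM : IsUnit M.det)
    (h : ∀ u, c * ‖u‖ ≤ ‖toEuclideanLin M u‖) (w : EuclideanSpace ℝ m) :
    c * ‖toEuclideanLin M⁻¹ w‖ ≤ ‖w‖ := by
  simpa [← toEuclideanLin_mul_apply, mul_nonsing_inv _ hM] using h (toEuclideanLin M⁻¹ w)

/-- `P (R H P)⁻¹ R` with `P = Rᵀ`; the coarse step is `x⁺ = x - coarseNewton R (∇²f x) (∇f x)`. -/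
def coarseNewton (R : Matrix m n ℝ) (H : Matrix n n ℝ) : Matrix n n ℝ :=
  Rᵀ * (R * H * Rᵀ)⁻¹ * R

theorem toEuclideanLin_sub_coarseNewton_eq_zero {R : Matrix m n ℝ} {H : Matrix n n ℝ}
    (hM : IsUnit (R * H * Rᵀ).det) (g : EuclideanSpace ℝ n) :
    toEuclideanLin R (g - toEuclideanLin H (toEuclideanLin (R.coarseNewton H) g)) = 0 := by
  have hRHN : R * H * R.coarseNewton H = R := by
    rw [coarseNewton, ← Matrix.mul_assoc, ← Matrix.mul_assoc, mul_nonsing_inv _ hM,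
      Matrix.one_mul]
  rw [map_sub, ← toEuclideanLin_mul_apply, ← toEuclideanLin_mul_apply, hRHN, sub_self]

theorem mul_norm_toEuclideanLin_coarseNewton_le {R : Matrix m n ℝ} {H : Matrix n n ℝ}
    {b c : ℝ} (hb : 0 ≤ b) (hc : 0 ≤ c) (hM : IsUnit (R * H * Rᵀ).det)
    (hMc : ∀ u, c * ‖u‖ ≤ ‖toEuclideanLin (R * H * Rᵀ) u‖)
    (hRt : ∀ u, ‖toEuclideanLin Rᵀ u‖ ≤ b * ‖u‖) (g : EuclideanSpace ℝ n) :
    c * ‖toEuclideanLin (R.coarseNewton H) g‖ ≤ b ^ 2 * ‖g‖ := by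
  set w := toEuclideanLin (R * H * Rᵀ)⁻¹ (toEuclideanLin R g)
  calc c * ‖toEuclideanLin (R.coarseNewton H) g‖ = c * ‖toEuclideanLin Rᵀ w‖ := by
        rw [coarseNewton, toEuclideanLin_mul_apply, toEuclideanLin_mul_apply]
    _ ≤ c * (b * ‖w‖) := by gcongr; exact hRt w
    _ = b * (c * ‖w‖) := by ring
    _ ≤ b * ‖toEuclideanLin R g‖ := by gcongr; exact mul_norm_toEuclideanLin_inv_le hM hMc _
    _ ≤ b * (b * ‖g‖) := by gcongr; exact norm_toEuclideanLin_le_of_transpose hb hRt g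
    _ = b ^ 2 * ‖g‖ := by ring

theorem specNorm_eq_norm_toEuclideanCLM {k : ℕ} (A : Matrix (Fin k) (Fin k) ℝ) :
    A.specNorm = ‖toEuclideanCLM (𝕜 := ℝ) A‖ := rfl

end Matrix

theorem jl_coarse_step_quadratic_bound_general
    {n p : ℕ}
    (f : EuclideanSpace ℝ (Fin n) → ℝ)
    (Hess : EuclideanSpace ℝ (Fin n) → Matrix (Fin n) (Fin n) ℝ)
    (hHess : ∀ y, HasFDerivAt (gradient f) (Matrix.toEuclideanCLM (𝕜 := ℝ) (Hess y)) y)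
    (μ L : ℝ) (hμ : 0 < μ) (hL : 0 < L)
    (hsc : ∀ y, (Hess y - μ • (1 : Matrix (Fin n) (Fin n) ℝ)).PosSemidef)
    (hLip : ∀ y z, Matrix.specNorm (Hess y - Hess z) ≤ L * ‖y - z‖)
    (ε : ℝ) (hε0 : 0 < ε) (hε1 : ε < 1 / 2)
    (R : Matrix (Fin p) (Fin n) ℝ)
    (hsv : ∀ i, R.singularValueT i ∈ Set.Icc (1 - ε) (1 + ε))
    (x xp : EuclideanSpace ℝ (Fin n))
    (hxp : xp = x - Matrix.toEuclideanLin (Rᵀ * (R * Hess x * Rᵀ)⁻¹ * R) (gradient f x))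
    (hacc : (1 - ε) * ‖gradient f xp‖ ≤ ‖Matrix.toEuclideanLin R (gradient f xp)‖) :
    ‖gradient f xp‖ ≤ L / (2 * μ ^ 2) * ((1 + ε) / (1 - ε)) ^ 5 * ‖gradient f x‖ ^ 2 := by
  have ha : 0 < 1 - ε := by linarith
  have hb : 0 < 1 + ε := by linarith
  have hc : 0 < μ * (1 - ε) ^ 2 := by positivity
  have hRt : ∀ u, ‖toEuclideanLin Rᵀ u‖ ≤ (1 + ε) * ‖u‖ :=
    norm_toEuclideanLin_transpose_le R hb.le fun i => (hsv i).2
  have hM : ∀ u, μ * (1 - ε) ^ 2 * ‖u‖ ≤ ‖toEuclideanLin (R * Hess x * Rᵀ) u‖ :=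
    mul_norm_le_norm_toEuclideanLin_mul_mul_transpose hμ.le ha.le (hsc x)
      (mul_norm_le_norm_toEuclideanLin_transpose R ha.le fun i => (hsv i).1)
  have hdet := isUnit_det_of_mul_norm_le hc hM
  set g := gradient f x
  obtain ⟨s, hs, rfl⟩ : ∃ s, s = -toEuclideanLin (R.coarseNewton (Hess x)) g ∧ xp = x + s :=
    ⟨_, rfl, by rw [hxp, coarseNewton, sub_eq_add_neg]⟩
  have hstep : μ * (1 - ε) ^ 2 * ‖s‖ ≤ (1 + ε) ^ 2 * ‖g‖ := by
    rw [hs, norm_neg]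
    exact mul_norm_toEuclideanLin_coarseNewton_le hb.le hc.le hdet hM hRt g
  have hres : toEuclideanLin R (gradient f (x + s) - g - toEuclideanLin (Hess x) s) =
      toEuclideanLin R (gradient f (x + s)) := by
    rw [hs, map_neg, sub_neg_eq_add, sub_add, map_sub,
      toEuclideanLin_sub_coarseNewton_eq_zero hdet, sub_zero]
  have hTaylor := norm_image_add_sub_sub_fderiv_le hHess (fun y => by
    simpa [specNorm_eq_norm_toEuclideanCLM] using hLip y x) s
  have hgrad : (1 - ε) * ‖gradient f (x + s)‖ ≤ (1 + ε) * (L / 2 * ‖s‖ ^ 2) :=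
    calc (1 - ε) * ‖gradient f (x + s)‖ ≤ ‖toEuclideanLin R (gradient f (x + s))‖ := hacc
      _ = ‖toEuclideanLin R (gradient f (x + s) - g - toEuclideanLin (Hess x) s)‖ := by
        rw [hres]
      _ ≤ (1 + ε) * ‖gradient f (x + s) - g - toEuclideanLin (Hess x) s‖ :=
        norm_toEuclideanLin_le_of_transpose hb.le hRt _
      _ ≤ (1 + ε) * (L / 2 * ‖s‖ ^ 2) := by gcongr; exact hTaylor
  calc ‖gradient f (x + s)‖ ≤ (1 + ε) / (1 - ε) * (L / 2 * ‖s‖ ^ 2) := by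
        rw [div_mul_eq_mul_div, le_div_iff₀ ha]; linarith
    _ ≤ (1 + ε) / (1 - ε) * (L / 2 * ((1 + ε) ^ 2 * ‖g‖ / (μ * (1 - ε) ^ 2)) ^ 2) := by
        gcongr; rw [le_div_iff₀ hc]; linarith
    _ = L / (2 * μ ^ 2) * ((1 + ε) / (1 - ε)) ^ 5 * ‖g‖ ^ 2 := by
        field_simp

/-- Johnson–Lindenstrauss-type step bound: if all singular values of
`P = Rᵀ` lie in `[1−ε, 1+ε]` and the acceptance condition holds with `σ = 1−ε`, then
`‖∇f(x⁺)‖ ≤ (L/(2μ²)) ((1+ε)/(1−ε))⁵ ‖∇f(x)‖²`. -/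
theorem jl_coarse_step_quadratic_bound
    {n p : ℕ} (hp : p ≤ n)
    (f : EuclideanSpace ℝ (Fin n) → ℝ)
    (hf : ContDiff ℝ 2 f)
    (Hess : EuclideanSpace ℝ (Fin n) → Matrix (Fin n) (Fin n) ℝ)
    (hHess : ∀ y, HasFDerivAt (gradient f) (Matrix.toEuclideanCLM (𝕜 := ℝ) (Hess y)) y)
    (μ L : ℝ) (hμ : 0 < μ) (hL : 0 < L)
    (hsc : ∀ y, (Hess y - μ • (1 : Matrix (Fin n) (Fin n) ℝ)).PosSemidef)
    (hLip : ∀ y z, Matrix.specNorm (Hess y - Hess z) ≤ L * ‖y - z‖)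
    (ε : ℝ) (hε0 : 0 < ε) (hε1 : ε < 1 / 2)
    (R : Matrix (Fin p) (Fin n) ℝ) (hR : R.rank = p)
    (hsv : ∀ i, R.singularValueT i ∈ Set.Icc (1 - ε) (1 + ε))
    (x xp : EuclideanSpace ℝ (Fin n))
    (hxp : xp = x - Matrix.toEuclideanLin (Rᵀ * (R * Hess x * Rᵀ)⁻¹ * R) (gradient f x))
    (hacc : (1 - ε) * ‖gradient f xp‖ ≤ ‖Matrix.toEuclideanLin R (gradient f xp)‖) :
    ‖gradient f xp‖ ≤ L / (2 * μ ^ 2) * ((1 + ε) / (1 - ε)) ^ 5 * ‖gradient f x‖ ^ 2 :=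
  jl_coarse_step_quadratic_bound_general f Hess hHess μ L hμ hL hsc hLip ε hε0 hε1 R hsv x xp hxp
    hacc

end
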